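/- Define S : ℕ × ℕ → ℕ by S(x, 0) = 1, S(0, y) = 1, and S(x+1, y+1) = (S(x+1, y) + S(x, y+1)) mod 2. Then for all x, y : ℕ, S(x, y) = 1 if and only if Nat.land x y = 0 (i.e., the binary representations of x and y share no common 1 bit). -/
import Mathlib


def S : ℕ → ℕ → ℕ
  | _, 0 => 1
  | 0, _ + 1 => 1
  | x + 1, y + 1 => (S (x + 1) y + S x (y + 1)) % 2
  termination_by x y => x + y

lemma S_eq_choose_mod_two (x y : ℕ) : S x y = (x + y).choose x % 2 := by
  match x, y with
  | x, 0 => simp [S]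
  | 0, y + 1 => simp [S]
  | x + 1, y + 1 =>
    rw [S, S_eq_choose_mod_two (x + 1) y, S_eq_choose_mod_two x (y + 1),
      ← Nat.add_mod]
    have h : x + 1 + (y + 1) = (x + y + 1) + 1 := by omega
    have h2 : x + 1 + y = x + y + 1 := by omega
    have h3 : x + (y + 1) = x + y + 1 := by omega
    rw [h, h2, h3, Nat.choose_succ_succ' (x + y + 1) x, Nat.add_comm]
  termination_by x + y

lemma choose_mod_two_eq_one_iff (x y : ℕ) :
    (x + y).choose x % 2 = 1 ↔ x &&& y = 0 := by
  rcases Nat.eq_zero_or_pos (x + y) with h | h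
  · have hx : x = 0 := by omega
    have hy : y = 0 := by omega
    simp [hx, hy]
  · have key := @Choose.choose_modEq_choose_mod_mul_choose_div_nat (x + y) x 2 ⟨Nat.prime_two⟩
    have hmod : (x + y).choose x % 2 =
        ((x + y) % 2).choose (x % 2) * ((x + y) / 2).choose (x / 2) % 2 := key
    have hdiv : (x + y) / 2 = x / 2 + y / 2 ∨ (x + y) / 2 = x / 2 + y / 2 + 1 := by omega
    have ih := choose_mod_two_eq_one_iff (x / 2) (y / 2)
    have hand : x &&& y = 0 ↔ (x &&& y) % 2 = 0 ∧ x / 2 &&& y / 2 = 0 := by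
      rw [← Nat.and_div_two]
      omega
    rcases Nat.mod_two_eq_zero_or_one x with hx | hx <;> rcases Nat.mod_two_eq_zero_or_one y with hy | hy
    · -- both even
      have hx2 : x % 2 = 0 := by omega
      have hy2 : y % 2 = 0 := by omega
      have hxy2 : (x + y) % 2 = 0 := by omega
      have hd : (x + y) / 2 = x / 2 + y / 2 := by omega
      rw [hmod, hx2, hxy2, hd]
      simp only [Nat.choose_zero_right, one_mul]
      rw [ih, hand]
      have : (x &&& y) % 2 = 0 := by
        have := @Nat.and_mod_two_eq_one x y
        omega
      tauto
    · have hx2 : x % 2 = 0 := by omega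
      have hy2 : y % 2 = 1 := by omega
      have hxy2 : (x + y) % 2 = 1 := by omega
      have hd : (x + y) / 2 = x / 2 + y / 2 := by omega
      rw [hmod, hx2, hxy2, hd]
      simp only [Nat.choose_zero_right, one_mul, Nat.choose_one_right]
      rw [ih, hand]
      have : (x &&& y) % 2 = 0 := by
        have := @Nat.and_mod_two_eq_one x y
        omega
      tauto
    · have hx2 : x % 2 = 1 := by omega
      have hy2 : y % 2 = 0 := by omega
      have hxy2 : (x + y) % 2 = 1 := by omega
      have hd : (x + y) / 2 = x / 2 + y / 2 := by omega
      rw [hmod, hx2, hxy2, hd]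
      have h1 : Nat.choose 1 1 = 1 := rfl
      rw [h1, one_mul, ih, hand]
      have : (x &&& y) % 2 = 0 := by
        have := @Nat.and_mod_two_eq_one x y
        omega
      tauto
    · -- both odd: LHS false, RHS false
      have hx2 : x % 2 = 1 := by omega
      have hy2 : y % 2 = 1 := by omega
      have hxy2 : (x + y) % 2 = 0 := by omega
      rw [hmod, hx2, hxy2]
      have h0 : Nat.choose 0 1 = 0 := rfl
      rw [h0, zero_mul]
      have : (x &&& y) % 2 = 1 := Nat.and_mod_two_eq_one.mpr ⟨hx2, hy2⟩
      constructor
      · omega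
      · intro hxy; omega
  termination_by x + y
  decreasing_by omega

theorem sierpinski_eq_one_iff_land_eq_zero (x y : ℕ) :
    S x y = 1 ↔ Nat.land x y = 0 := by
  rw [S_eq_choose_mod_two, choose_mod_two_eq_one_iff]
  rfl
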